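/- arXiv:hep-th/0407108 — 5 statements merged into one kernel-verified Lean document; each statement's English description precedes it below -/
import Mathlib

section
/- Holomorphic branches of solutions of the rescaled twisted Bethe system. For every choice of integers (n_1,…,n_N) ∈ {0,…,M−1}^N and every w ∈ ℂ with w^M = q^{2(1−N)}, there exist ε > 0 and holomorphic functions u_1,…,u_N on the disc {θ ∈ ℂ : |θ| < ε} such that Ỹ_θ(u_j(θ)|u(θ)) = 0 for all j = 1,…,N and all |θ| < ε, and u_j(0) = (q^{−1} − q)·w·e^{2πi n_j/M}; moreover this solution is unique among continuous ℂ^N-valued functions defined on a neighbourhood of θ = 0 taking these values at θ = 0. -/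
open Complex Matrix Finset

noncomputable section

/-- Spin configurations of a chain of length `M` (value `0` = spin up). -/
abbrev Conf (M : ℕ) := Fin M → Fin 2

/-- The quantum space `H = (ℂ²)^{⊗M}`, realized as functions on configurations. -/
abbrev QS (M : ℕ) := Conf M → ℂ

/-- The operator acting at site `n` by the 2×2 matrix `A` and as identity elsewhere. -/
def siteOp {M : ℕ} (n : Fin M) (A : Matrix (Fin 2) (Fin 2) ℂ) :
    Module.End ℂ (QS M) where
  toFun f := fun s => ∑ j : Fin 2, A (s n) j * f (Function.update s n j)
  map_add' f g := by
    funext s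
    simp [mul_add, Finset.sum_add_distrib]
  map_smul' c f := by
    funext s
    simp only [Pi.smul_apply, smul_eq_mul, RingHom.id_apply, Finset.mul_sum]
    exact Finset.sum_congr rfl fun j _ => by ring

def pauliX : Matrix (Fin 2) (Fin 2) ℂ := !![0, 1; 1, 0]
def pauliY : Matrix (Fin 2) (Fin 2) ℂ := !![0, -Complex.I; Complex.I, 0]
def pauliZ : Matrix (Fin 2) (Fin 2) ℂ := !![1, 0; 0, -1]
/-- `σ⁺ = (σˣ + iσʸ)/2`. -/
def pauliP : Matrix (Fin 2) (Fin 2) ℂ := !![0, 1; 0, 0]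
/-- `σ⁻ = (σˣ − iσʸ)/2`. -/
def pauliM : Matrix (Fin 2) (Fin 2) ℂ := !![0, 0; 1, 0]

/-- The `L`-operator at site `n` with spectral parameter `lam`. -/
def Lmat (M : ℕ) (η lam : ℂ) (n : Fin M) :
    Matrix (Fin 2) (Fin 2) (Module.End ℂ (QS M)) :=
  !![siteOp n !![Complex.sinh (lam + η/2), 0; 0, Complex.sinh (lam - η/2)],
       Complex.sinh η • siteOp n pauliM;
     Complex.sinh η • siteOp n pauliP,
       siteOp n !![Complex.sinh (lam - η/2), 0; 0, Complex.sinh (lam + η/2)]]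

/-- The monodromy matrix `T(λ) = L_M(λ) ⋯ L_1(λ)`. -/
def Tmon (M : ℕ) (η lam : ℂ) : Matrix (Fin 2) (Fin 2) (Module.End ℂ (QS M)) :=
  ((List.ofFn fun n : Fin M => Lmat M η lam n).reverse).prod

def Aop (M : ℕ) (η lam : ℂ) : Module.End ℂ (QS M) := Tmon M η lam 0 0
def Bop (M : ℕ) (η lam : ℂ) : Module.End ℂ (QS M) := Tmon M η lam 0 1
def Cop (M : ℕ) (η lam : ℂ) : Module.End ℂ (QS M) := Tmon M η lam 1 0
def Dop (M : ℕ) (η lam : ℂ) : Module.End ℂ (QS M) := Tmon M η lam 1 1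

/-- The twisted transfer matrix `T_κ(μ) = A(μ) + κ D(μ)`. -/
def Tk (M : ℕ) (η κ μ : ℂ) : Module.End ℂ (QS M) := Aop M η μ + κ • Dop M η μ

/-- The transfer matrix `T(μ) = A(μ) + D(μ)`. -/
def Ttm (M : ℕ) (η μ : ℂ) : Module.End ℂ (QS M) := Tk M η 1 μ

/-- The all-spins-up configuration. -/
def upC (M : ℕ) : Conf M := fun _ => 0

/-- The vacuum vector `|0⟩` (all spins up). -/
def vac (M : ℕ) : QS M := fun s => if s = upC M then 1 else 0

/-- The vacuum expectation value `⟨0|O|0⟩`. -/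
def vev {M : ℕ} (O : Module.End ℂ (QS M)) : ℂ := (O (vac M)) (upC M)

/-- `∏_{j=1}^N B(λ_j)`. -/
def prodB (M : ℕ) (η : ℂ) {N : ℕ} (lam : Fin N → ℂ) : Module.End ℂ (QS M) :=
  (List.ofFn fun j : Fin N => Bop M η (lam j)).prod

/-- `∏_{j=1}^N C(λ_j)`. -/
def prodC (M : ℕ) (η : ℂ) {N : ℕ} (lam : Fin N → ℂ) : Module.End ℂ (QS M) :=
  (List.ofFn fun j : Fin N => Cop M η (lam j)).prod

/-- `a(μ) = sinh^M(μ + η/2)`. -/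
def af (M : ℕ) (η μ : ℂ) : ℂ := (Complex.sinh (μ + η/2)) ^ M

/-- `d(μ) = sinh^M(μ − η/2)`. -/
def df (M : ℕ) (η μ : ℂ) : ℂ := (Complex.sinh (μ - η/2)) ^ M

/-- `Y_κ(μ|λ)`. -/
def Yf (M : ℕ) (η κ : ℂ) {N : ℕ} (μ : ℂ) (lam : Fin N → ℂ) : ℂ :=
  af M η μ * ∏ k, Complex.sinh (lam k - μ + η)
    + κ * df M η μ * ∏ k, Complex.sinh (lam k - μ - η)

/-- `τ_κ(μ|λ)`. -/
def tauf (M : ℕ) (η κ : ℂ) {N : ℕ} (μ : ℂ) (lam : Fin N → ℂ) : ℂ :=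
  af M η μ * ∏ k, (Complex.sinh (lam k - μ + η) / Complex.sinh (lam k - μ))
    + κ * df M η μ * ∏ k, (Complex.sinh (μ - lam k + η) / Complex.sinh (μ - lam k))

/-- The twisted Bethe equations `Y_κ(λ_j|λ) = 0`, `j = 1,…,N`. -/
def BetheSol (M : ℕ) (η κ : ℂ) {N : ℕ} (lam : Fin N → ℂ) : Prop :=
  ∀ j, Yf M η κ (lam j) lam = 0

/-- Admissibility: `d(λ_j) ∏_{k≠j} sinh(λ_j − λ_k + η) ≠ 0` for all `j`. -/
def Admissible (M : ℕ) (η : ℂ) {N : ℕ} (lam : Fin N → ℂ) : Prop :=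
  ∀ j, df M η (lam j) * ∏ k ∈ Finset.univ.erase j, Complex.sinh (lam j - lam k + η) ≠ 0

/-- The bare one-particle energy `E(λ)`. -/
def Ebare (η lam : ℂ) : ℂ :=
  2 * (Complex.sinh η) ^ 2 / (Complex.sinh (lam + η/2) * Complex.sinh (lam - η/2))

/-- `t(λ,μ) = sinh η /(sinh(λ−μ) sinh(λ−μ+η))`. -/
def tfun (η lam mu : ℂ) : ℂ :=
  Complex.sinh η / (Complex.sinh (lam - mu) * Complex.sinh (lam - mu + η))

/-- The matrix `Ω_κ(λ,μ|ν)`. -/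
def Omega (M : ℕ) (η κ : ℂ) {n n' : ℕ} (lam mu : Fin n → ℂ) (nu : Fin n' → ℂ) :
    Matrix (Fin n) (Fin n) ℂ :=
  Matrix.of fun j k =>
    af M η (mu k) * tfun η (lam j) (mu k) * ∏ a, Complex.sinh (nu a - mu k + η)
      - κ * df M η (mu k) * tfun η (mu k) (lam j) * ∏ a, Complex.sinh (nu a - mu k - η)

/-- Exponential of an endomorphism of the (finite-dimensional) quantum space. -/
def endExp {M : ℕ} (A : Module.End ℂ (QS M)) : Module.End ℂ (QS M) :=
  Matrix.toLin (Pi.basisFun ℂ (Conf M)) (Pi.basisFun ℂ (Conf M))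
    (NormedSpace.exp
      (LinearMap.toMatrix (Pi.basisFun ℂ (Conf M)) (Pi.basisFun ℂ (Conf M)) A))

/-- Entrywise complex derivative of an operator-valued function at a point. -/
def endDeriv {M : ℕ} (F : ℂ → Module.End ℂ (QS M)) (z : ℂ) : Module.End ℂ (QS M) :=
  Matrix.toLin (Pi.basisFun ℂ (Conf M)) (Pi.basisFun ℂ (Conf M))
    (Matrix.of fun i j =>
      deriv (fun w =>
        LinearMap.toMatrix (Pi.basisFun ℂ (Conf M)) (Pi.basisFun ℂ (Conf M)) (F w) i j) z)

/-- The next site, with periodic identification `M+1 ≡ 1`. -/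
def nxt {M : ℕ} (m : Fin M) : Fin M := ⟨(m + 1) % M, Nat.mod_lt _ m.pos⟩

/-- The XXZ Hamiltonian `H⁰` with periodic boundary conditions. -/
def Ham (M : ℕ) (η : ℂ) : Module.End ℂ (QS M) :=
  ∑ m : Fin M,
    (siteOp m pauliX * siteOp (nxt m) pauliX + siteOp m pauliY * siteOp (nxt m) pauliY
      + Complex.cosh η • (siteOp m pauliZ * siteOp (nxt m) pauliZ - 1))

/-- The twisted Hamiltonian `H⁰_κ = 2 sinh η · T_κ′(η/2) T_κ(η/2)⁻¹ − 2M cosh η`. -/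
def HamK (M : ℕ) (η κ : ℂ) : Module.End ℂ (QS M) :=
  (2 * Complex.sinh η) • (endDeriv (fun lam => Tk M η κ lam) (η/2)
      * Ring.inverse (Tk M η κ (η/2)))
    - ((2 * M : ℂ) * Complex.cosh η) • 1

/-- The third component of total spin `S_z`. -/
def SzOp (M : ℕ) : Module.End ℂ (QS M) := (2 : ℂ)⁻¹ • ∑ m : Fin M, siteOp m pauliZ

/-- The generating function `Q_κ(m,t)`. -/
def Qgen (M : ℕ) (η : ℂ) {N : ℕ} (lam : Fin N → ℂ) (κ : ℂ) (m : ℕ) (t : ℝ) : ℂ :=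
  vev (prodC M η lam * (Tk M η κ (η/2)) ^ m
      * endExp ((Complex.I * (t : ℂ)) • HamK M η κ)
      * (Ring.inverse (Ttm M η (η/2))) ^ m
      * endExp ((-(Complex.I * (t : ℂ))) • Ham M η)
      * prodB M η lam)
    / vev (prodC M η lam * prodB M η lam)

/-- Partial derivative of a function of `N` complex variables in the `k`-th variable. -/
def pderiv {N : ℕ} (F : (Fin N → ℂ) → ℂ) (k : Fin N) (z : Fin N → ℂ) : ℂ :=
  deriv (fun w => F (Function.update z k w)) (z k)

/-- Iterated counterclockwise circle integral `∮_{|z_1-c_1|=r} dz_1 ⋯ ∮_{|z_n-c_n|=r} dz_n F(z)`. -/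
def iterCircle : (n : ℕ) → ((Fin n → ℂ) → ℂ) → (Fin n → ℂ) → ℝ → ℂ
  | 0, F, _, _ => F (fun i => i.elim0)
  | n + 1, F, c, r =>
      circleIntegral
        (fun z => iterCircle n (fun w => F (Fin.cons z w)) (fun i => c i.succ) r) (c 0) r


/-- The rescaled twisted Bethe system `Ỹ_θ(u_j|u)`. -/
def Ytil (M N : ℕ) (q θ : ℂ) (u : Fin N → ℂ) (j : Fin N) : ℂ :=
  (u j) ^ M * ∏ a ∈ Finset.univ.erase j, (θ * (u j - q ^ 2 * u a) + q - q⁻¹)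
    - (θ * u j - q + q⁻¹) ^ M *
        ∏ a ∈ Finset.univ.erase j, (θ * (u j - q ^ (-2 : ℤ) * u a) + q⁻¹ - q ^ (-3 : ℤ))


/-!
At `θ = 0` the system decouples:
`Ỹ_0(u_j|u) = (q - q⁻¹)^(N-1) u_j^M - (q⁻¹ - q)^M (q⁻¹ - q⁻³)^(N-1)`,
whose roots are exactly the prescribed values `u_j(0)`, all of them simple. Hence the Jacobian in
`u` at `θ = 0` is diagonal with nonzero entries `M u_j(0)^(M-1) (q - q⁻¹)^(N-1)`, and the
holomorphic implicit function theorem produces the branch together with its local uniqueness among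
continuous solutions.
-/

open Filter Topology

section ImplicitBranch

variable {𝕜 E G : Type*} [RCLike 𝕜]
  [NormedAddCommGroup E] [NormedSpace 𝕜 E] [CompleteSpace E]
  [NormedAddCommGroup G] [NormedSpace 𝕜 G] [CompleteSpace G]
  {F : 𝕜 × E → G} {θ₀ : 𝕜} {x₀ : E} {L : E →L[𝕜] G}

theorem exists_differentiableOn_implicit_branch (hF : ContDiffAt 𝕜 1 F (θ₀, x₀))
    (hF₀ : F (θ₀, x₀) = 0) (hL : HasFDerivAt (fun x => F (θ₀, x)) L x₀)
    (hLinv : L.IsInvertible) :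
    ∃ ε > 0, ∃ g : 𝕜 → E, DifferentiableOn 𝕜 g (Metric.ball θ₀ ε) ∧
      (∀ θ ∈ Metric.ball θ₀ ε, F (θ, g θ) = 0) ∧ g θ₀ = x₀ ∧
      ∀ v : 𝕜 → E, ContinuousAt v θ₀ → v θ₀ = x₀ → (∀ᶠ θ in 𝓝 θ₀, F (θ, v θ) = 0) →
        v =ᶠ[𝓝 θ₀] g := by
  have hinv : (fderiv 𝕜 F (θ₀, x₀) ∘L .inr 𝕜 𝕜 E).IsInvertible := by
    have hpartial := (hF.differentiableAt one_ne_zero).hasFDerivAt.comp x₀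
      (hasFDerivAt_prodMk_right θ₀ x₀)
    rwa [hpartial.unique hL]
  set g := hF.implicitFunction one_ne_zero hinv
  have hg_smooth : ∀ᶠ θ in 𝓝 θ₀, DifferentiableAt 𝕜 g θ :=
    ((hF.contDiffAt_implicitFunction one_ne_zero hinv).eventually (by simp)).mono
      fun θ hθ => hθ.differentiableAt one_ne_zero
  obtain ⟨ε, hε, hball⟩ := Metric.eventually_nhds_iff_ball.1
    (hg_smooth.and (hF.eventually_apply_implicitFunction one_ne_zero hinv))
  refine ⟨ε, hε, g, fun θ hθ => (hball θ hθ).1.differentiableWithinAt,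
    fun θ hθ => (hball θ hθ).2.trans hF₀, hF.implicitFunction_apply_self one_ne_zero hinv, ?_⟩
  intro v hv hv₀ hvF
  have hgraph : Tendsto (fun θ => (θ, v θ)) (𝓝 θ₀) (𝓝 (θ₀, x₀)) :=
    hv₀ ▸ continuousAt_id.prodMk hv
  filter_upwards [hgraph.eventually (hF.eventually_apply_eq_iff_implicitFunction one_ne_zero hinv),
    hvF] with θ hiff hθ
  exact (hiff.1 (hθ.trans hF₀.symm)).symm

end ImplicitBranch

theorem isInvertible_pi_smul_proj {𝕜 ι : Type*} [NontriviallyNormedField 𝕜] {d : ι → 𝕜}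
    (hd : ∀ i, d i ≠ 0) :
    (ContinuousLinearMap.pi fun i =>
      d i • ContinuousLinearMap.proj (R := 𝕜) (φ := fun _ : ι => 𝕜) i).IsInvertible := by
  refine .of_inverse (g := ContinuousLinearMap.pi fun i => (d i)⁻¹ • ContinuousLinearMap.proj i)
    ?_ ?_ <;> ext x i <;> simp [hd]

theorem exp_two_pi_I_mul_div_pow_eq_one (k M : ℕ) :
    Complex.exp (2 * Real.pi * Complex.I * k / M) ^ M = 1 := by
  rcases Nat.eq_zero_or_pos M with rfl | hM
  · simp
  have hM' : (M : ℂ) ≠ 0 := by exact_mod_cast hM.ne'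
  rw [← Complex.exp_nat_mul, Complex.exp_eq_one_iff]
  exact ⟨k, by push_cast; field_simp⟩

theorem exp_sub_exp_inv_ne_zero {η : ℂ} (hη : Complex.sinh η ≠ 0) :
    Complex.exp η - (Complex.exp η)⁻¹ ≠ 0 := by
  rw [← Complex.exp_neg, ← Complex.two_sinh]
  exact mul_ne_zero two_ne_zero hη

theorem Ytil_zero (M N : ℕ) (q : ℂ) (u : Fin N → ℂ) (j : Fin N) :
    Ytil M N q 0 u j = u j ^ M * (q - q⁻¹) ^ (N - 1)
      - (q⁻¹ - q) ^ M * (q⁻¹ - q ^ (-3 : ℤ)) ^ (N - 1) := by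
  simp [Ytil, Finset.prod_const, Finset.card_erase_of_mem, neg_add_eq_sub]

theorem Ytil_zero_eq_zero_of_pow_eq {M N : ℕ} {q : ℂ} (hq : q ≠ 0) {u : Fin N → ℂ} {j : Fin N}
    (hu : u j ^ M = (q⁻¹ - q) ^ M * q ^ (2 * (1 - (N : ℤ)))) :
    Ytil M N q 0 u j = 0 := by
  have hfactor : q⁻¹ - q ^ (-3 : ℤ) = q ^ (-2 : ℤ) * (q - q⁻¹) := by
    simp only [_root_.zpow_neg]; field_simp
  have hpow : q ^ (2 * (1 - (N : ℤ))) = (q ^ (-2 : ℤ)) ^ (N - 1) := by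
    rw [← zpow_natCast, ← _root_.zpow_mul, Nat.cast_sub j.pos]
    ring_nf
  rw [Ytil_zero, hu, hfactor, hpow, mul_pow]
  ring

theorem contDiff_Ytil (M N : ℕ) (q : ℂ) {n : WithTop ℕ∞} :
    ContDiff ℂ n fun p : ℂ × (Fin N → ℂ) => fun j => Ytil M N q p.1 p.2 j := by
  refine contDiff_pi.2 fun j => ?_
  unfold Ytil
  fun_prop

theorem hasFDerivAt_Ytil_zero (M N : ℕ) (q : ℂ) (x₀ : Fin N → ℂ) :
    HasFDerivAt (fun x : Fin N → ℂ => fun j => Ytil M N q 0 x j)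
      (ContinuousLinearMap.pi fun j => (M * x₀ j ^ (M - 1) * (q - q⁻¹) ^ (N - 1)) •
        ContinuousLinearMap.proj (R := ℂ) (φ := fun _ : Fin N => ℂ) j) x₀ := by
  simp only [Ytil_zero]
  refine hasFDerivAt_pi.2 fun j => ?_
  convert (((hasFDerivAt_apply (𝕜 := ℂ) j x₀).pow M).mul_const ((q - q⁻¹) ^ (N - 1))).sub_const
    ((q⁻¹ - q) ^ M * (q⁻¹ - q ^ (-3 : ℤ)) ^ (N - 1)) using 1
  ext
  simp only [_root_.smul_apply, ContinuousLinearMap.proj_apply, smul_eq_mul,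
    nsmul_eq_mul]
  ring

theorem holomorphic_branches_rescaled_Bethe_general
    (M : ℕ) (N : ℕ)
    (η : ℂ) (hη : Complex.sinh η ≠ 0) :
    ∀ n : Fin N → Fin M, ∀ w : ℂ, w ^ M = (Complex.exp η) ^ (2 * (1 - (N : ℤ))) →
      ∃ ε : ℝ, 0 < ε ∧ ∃ u : Fin N → ℂ → ℂ,
        (∀ j, DifferentiableOn ℂ (u j) (Metric.ball (0 : ℂ) ε)) ∧
        (∀ θ ∈ Metric.ball (0 : ℂ) ε, ∀ j,
          Ytil M N (Complex.exp η) θ (fun i => u i θ) j = 0) ∧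
        (∀ j, u j 0 = ((Complex.exp η)⁻¹ - Complex.exp η) * w *
          Complex.exp (2 * (Real.pi : ℂ) * Complex.I * ((n j : ℕ) : ℂ) / (M : ℂ))) ∧
        (∀ (v : ℂ → Fin N → ℂ) (s : Set ℂ), s ∈ nhds (0 : ℂ) → ContinuousOn v s →
          (∀ θ ∈ s, ∀ j, Ytil M N (Complex.exp η) θ (v θ) j = 0) →
          (∀ j, v 0 j = ((Complex.exp η)⁻¹ - Complex.exp η) * w *
            Complex.exp (2 * (Real.pi : ℂ) * Complex.I * ((n j : ℕ) : ℂ) / (M : ℂ))) →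
          ∀ᶠ θ in nhds (0 : ℂ), ∀ j, v θ j = u j θ) := by
  intro n w hw
  set q := Complex.exp η
  have hq : q - q⁻¹ ≠ 0 := exp_sub_exp_inv_ne_zero hη
  set u₀ : Fin N → ℂ := fun j => (q⁻¹ - q) * w *
    Complex.exp (2 * (Real.pi : ℂ) * Complex.I * ((n j : ℕ) : ℂ) / (M : ℂ))
  have hu₀ : ∀ j, u₀ j ^ M = (q⁻¹ - q) ^ M * q ^ (2 * (1 - (N : ℤ))) := fun j => by
    rw [mul_pow, mul_pow, exp_two_pi_I_mul_div_pow_eq_one, hw, mul_one]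
  have hu₀_ne : ∀ j, u₀ j ≠ 0 := fun j => ne_zero_pow (n j).pos.ne' <| by
    rw [hu₀ j]
    exact mul_ne_zero (pow_ne_zero _ (by rwa [← neg_sub, neg_ne_zero]))
      (zpow_ne_zero _ (Complex.exp_ne_zero η))
  obtain ⟨ε, hε, g, hg_diff, hg_eq, hg₀, hg_unique⟩ :=
    exists_differentiableOn_implicit_branch (contDiff_Ytil M N q).contDiffAt
      (funext fun j => Ytil_zero_eq_zero_of_pow_eq (Complex.exp_ne_zero η) (hu₀ j))
      (hasFDerivAt_Ytil_zero M N q u₀)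
      (isInvertible_pi_smul_proj fun j => mul_ne_zero (mul_ne_zero
        (Nat.cast_ne_zero.2 (n j).pos.ne') (pow_ne_zero _ (hu₀_ne j))) (pow_ne_zero _ hq))
  refine ⟨ε, hε, fun j θ => g θ j, differentiableOn_pi.1 hg_diff,
    fun θ hθ j => congrFun (hg_eq θ hθ) j, fun j => congrFun hg₀ j, ?_⟩
  intro v s hs hv hv_eq hv₀
  filter_upwards [hg_unique v (hv.continuousAt hs) (funext hv₀)
    (mem_of_superset hs fun θ hθ => funext (hv_eq θ hθ))] with θ hθ j
  exact congrFun hθ j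

/-- Holomorphic branches of solutions of the rescaled twisted Bethe system. -/
theorem holomorphic_branches_rescaled_Bethe
    (M : ℕ) (hM : 2 ≤ M) (hMe : Even M) (N : ℕ) (hN : 1 ≤ N) (hNM : N ≤ M)
    (η : ℂ) (hη : Complex.sinh η ≠ 0) :
    ∀ n : Fin N → Fin M, ∀ w : ℂ, w ^ M = (Complex.exp η) ^ (2 * (1 - (N : ℤ))) →
      ∃ ε : ℝ, 0 < ε ∧ ∃ u : Fin N → ℂ → ℂ,
        (∀ j, DifferentiableOn ℂ (u j) (Metric.ball (0 : ℂ) ε)) ∧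
        (∀ θ ∈ Metric.ball (0 : ℂ) ε, ∀ j,
          Ytil M N (Complex.exp η) θ (fun i => u i θ) j = 0) ∧
        (∀ j, u j 0 = ((Complex.exp η)⁻¹ - Complex.exp η) * w *
          Complex.exp (2 * (Real.pi : ℂ) * Complex.I * ((n j : ℕ) : ℂ) / (M : ℂ))) ∧
        (∀ (v : ℂ → Fin N → ℂ) (s : Set ℂ), s ∈ nhds (0 : ℂ) → ContinuousOn v s →
          (∀ θ ∈ s, ∀ j, Ytil M N (Complex.exp η) θ (v θ) j = 0) →
          (∀ j, v 0 j = ((Complex.exp η)⁻¹ - Complex.exp η) * w *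
            Complex.exp (2 * (Real.pi : ℂ) * Complex.I * ((n j : ℕ) : ℂ) / (M : ℂ))) →
          ∀ᶠ θ in nhds (0 : ℂ), ∀ j, v θ j = u j θ) :=
  holomorphic_branches_rescaled_Bethe_general M N η hη
end
end

section
/- Free-fermion reduction of the twisted Bethe system. Let q = i (so q² = −1) and let x_1,…,x_N ∈ ℂ satisfy x_j + x_a ≠ 0 for all a ≠ j. Then (x_1,…,x_N) satisfies the system Ŷ_κ(x_j|x) = 0 for all j = 1,…,N if and only if (x_j + i)^M = κ·e^{iπ(N−1−M/2)}·(x_j − i)^M for every j = 1,…,N. -/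
open Complex Matrix Finset

noncomputable section

/-- The twisted Bethe system in multiplicative variables. -/
def Yhat (M N : ℕ) (q κ : ℂ) (x : Fin N → ℂ) (j : Fin N) : ℂ :=
  (x j - q⁻¹) ^ M * ∏ a ∈ Finset.univ.erase j, (x j - q ^ 2 * x a)
    - κ * q ^ (2 * (N : ℤ) - 2 - (M : ℤ)) * (x j - q) ^ M *
        ∏ a ∈ Finset.univ.erase j, (x j - q ^ (-2 : ℤ) * x a)

/-- Admissibility in multiplicative variables: `x_j ≠ q` and `x_k ≠ q² x_j` for `k ≠ j`. -/
def AdmX {N : ℕ} (q : ℂ) (x : Fin N → ℂ) : Prop :=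
  ∀ j, x j ≠ q ∧ ∀ k, k ≠ j → x k ≠ q ^ 2 * x j

/-! At `q = i` we have `q⁻¹ = -q` and `q^{±2} = -1`, so both products in `Ŷ_κ(x_j|x)` become
`∏_{a ≠ j} (x_j + x_a)`. This common factor is nonzero by hypothesis, and what remains is the
stated one-particle equation, since `i^{2N-2-M} = e^{iπ(N-1-M/2)}`. -/

lemma Complex.I_zpow_eq_exp (n : ℤ) : I ^ n = exp (n * (Real.pi / 2 * I)) := by
  rw [exp_int_mul, exp_pi_div_two_mul_I]

lemma Yhat_of_sq_eq_neg_one {q : ℂ} (hq : q ^ 2 = -1) (M N : ℕ) (κ : ℂ) (x : Fin N → ℂ)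
    (j : Fin N) :
    Yhat M N q κ x j = (∏ a ∈ univ.erase j, (x j + x a)) *
      ((x j + q) ^ M - κ * q ^ (2 * (N : ℤ) - 2 - (M : ℤ)) * (x j - q) ^ M) := by
  have hinv : q⁻¹ = -q := inv_eq_of_mul_eq_one_right (by linear_combination -hq)
  have hneg_two : q ^ (-2 : ℤ) = -1 := by
    rw [_root_.zpow_neg, zpow_ofNat, hq, inv_neg, inv_one]
  rw [Yhat, hinv, hq, hneg_two]
  simp only [neg_one_mul, sub_neg_eq_add]
  ring

theorem free_fermion_reduction_general
    (M : ℕ) (N : ℕ) (κ : ℂ)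
    (x : Fin N → ℂ) (hx : ∀ j a, a ≠ j → x j + x a ≠ 0) :
    (∀ j, Yhat M N Complex.I κ x j = 0) ↔
      ∀ j, (x j + Complex.I) ^ M =
        κ * Complex.exp (Complex.I * (Real.pi : ℂ) * ((N : ℂ) - 1 - (M : ℂ) / 2)) *
          (x j - Complex.I) ^ M := by
  have hfactor (j : Fin N) : ∏ a ∈ univ.erase j, (x j + x a) ≠ 0 :=
    prod_ne_zero_iff.mpr fun a ha => hx j a (ne_of_mem_erase ha)
  have hphase :
      I ^ (2 * (N : ℤ) - 2 - (M : ℤ)) = exp (I * Real.pi * ((N : ℂ) - 1 - (M : ℂ) / 2)) := by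
    rw [I_zpow_eq_exp]
    congr 1
    push_cast
    ring
  simp only [Yhat_of_sq_eq_neg_one I_sq, hphase, mul_eq_zero, hfactor, false_or, sub_eq_zero]

/-- Free-fermion (`q = i`) reduction of the twisted Bethe system. -/
theorem free_fermion_reduction
    (M : ℕ) (hM : 2 ≤ M) (hMe : Even M) (N : ℕ) (hN : 1 ≤ N) (hNM : N ≤ M) (κ : ℂ)
    (x : Fin N → ℂ) (hx : ∀ j a, a ≠ j → x j + x a ≠ 0) :
    (∀ j, Yhat M N Complex.I κ x j = 0) ↔
      ∀ j, (x j + Complex.I) ^ M =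
        κ * Complex.exp (Complex.I * (Real.pi : ℂ) * ((N : ℂ) - 1 - (M : ℂ) / 2)) *
          (x j - Complex.I) ^ M :=
  free_fermion_reduction_general M N κ x hx

end
end

section
/- Inversion of the twisted transfer matrix at η/2. For every κ ∈ ℂ, T_κ(η/2) ∘ T_κ(−η/2) = κ·a(η/2)·d(−η/2)·Id_H = κ·sinh^{2M}(η)·Id_H (using that M is even). In particular, for κ ≠ 0 the operator T_κ(η/2) is invertible with T_κ(η/2)^{−1} = (κ·a(η/2)·d(−η/2))^{−1}·T_κ(−η/2). -/
open Complex Matrix Finset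

noncomputable section

/-!
At `λ = η/2` every `L`-operator is `sinh η` times the permutation of the auxiliary spin with the
spin at its site, so the monodromy matrix carries the auxiliary spin down the whole chain and
`T_κ(η/2)` is `sinh^M η` times the cyclic shift of the chain, weighted by `κ` when the spin moved
from the first site to the last is down. At `λ = -η/2` every `L`-operator is, up to sign, this
permutation composed with spin flips, and `T_κ(-η/2)` is `(-sinh η)^M = d(-η/2)` times the inverse
shift, weighted by `κ` when the spin moved from the last site back to the first is up. In the
product both weights fall on the same spin, and exactly one of them is `κ`.
-/

theorem Fin.val_cycleRange {n : ℕ} (i j : Fin n) :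
    (Fin.cycleRange i j : ℕ) = if j < i then (j : ℕ) + 1 else if j = i then 0 else (j : ℕ) := by
  rcases lt_trichotomy j i with h | rfl | h
  · rw [Fin.coe_cycleRange_of_lt h, if_pos h]
  · rw [Fin.coe_cycleRange_of_le le_rfl]
    simp
  · rw [Fin.cycleRange_of_gt h, if_neg h.not_gt, if_neg h.ne']

theorem Fin.cycleRange_succ_eq_mul_swap {m : ℕ} (i : Fin m) :
    Fin.cycleRange i.succ = Fin.cycleRange i.castSucc * Equiv.swap i.castSucc i.succ := by
  ext n
  simp only [Equiv.Perm.mul_apply, Equiv.swap_apply_def]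
  split_ifs <;>
    simp only [Fin.val_cycleRange, Fin.lt_def, Fin.ext_iff, Fin.val_succ, Fin.val_castSucc] at * <;>
    split_ifs <;> omega

theorem Fin.update_update_comp_cycleRange_castSucc {α : Type*} {m : ℕ} (i : Fin m)
    (s : Fin (m + 1) → α) (a : α) :
    Function.update (Function.update s i.succ a ∘ Fin.cycleRange i.castSucc) i.castSucc (s i.succ)
      = Function.update (s ∘ Fin.cycleRange i.succ) i.succ a := by
  have hne : i.castSucc ≠ i.succ := Fin.castSucc_lt_succ.ne
  have hfix : Fin.cycleRange i.castSucc i.succ = i.succ := Fin.cycleRange_of_gt Fin.castSucc_lt_succ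
  funext n
  rw [Fin.cycleRange_succ_eq_mul_swap]
  by_cases h₁ : n = i.castSucc
  · subst h₁
    simp [hne, hfix]
  by_cases h₂ : n = i.succ
  · subst h₂
    simp [hfix, hne.symm]
  have h₃ : Fin.cycleRange i.castSucc n ≠ i.succ :=
    hfix ▸ (Fin.cycleRange i.castSucc).injective.ne h₂
  simp [h₁, h₂, h₃, Equiv.swap_apply_of_ne_of_ne]

theorem Fin.update_update_comp_cycleRange_castSucc_symm {α : Type*} {m : ℕ} (i : Fin m)
    (s : Fin (m + 1) → α) (v : α) :
    Function.update (Function.update s i.succ (s i.castSucc) ∘ (Fin.cycleRange i.castSucc).symm) 0 v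
      = Function.update (s ∘ (Fin.cycleRange i.succ).symm) 0 v := by
  funext n
  by_cases h₀ : n = 0
  · simp [h₀]
  have h₁ : (Fin.cycleRange i.castSucc).symm n ≠ i.castSucc := by
    intro h
    apply h₀
    rw [← Equiv.apply_symm_apply (Fin.cycleRange i.castSucc) n, h, Fin.cycleRange_self]
  have hsymm : (Fin.cycleRange i.castSucc * Equiv.swap i.castSucc i.succ).symm n
      = Equiv.swap i.castSucc i.succ ((Fin.cycleRange i.castSucc).symm n) := rfl
  rw [Fin.cycleRange_succ_eq_mul_swap, Function.update_of_ne h₀, Function.update_of_ne h₀,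
    Function.comp_apply, Function.comp_apply, hsymm]
  by_cases h₂ : (Fin.cycleRange i.castSucc).symm n = i.succ
  · rw [h₂, Equiv.swap_apply_right, Function.update_self]
  · rw [Function.update_of_ne h₂, Equiv.swap_apply_of_ne_of_ne h₁ h₂]

theorem Fin.fin_two_eq_rev_iff_ne {a b : Fin 2} : a = b.rev ↔ a ≠ b := by
  fin_cases a <;> fin_cases b <;> decide

theorem isUnit_and_inverse_eq_of_mul_eq_smul_one {K A : Type*} [Field K] [Ring A] [Algebra K A]
    [IsDedekindFiniteMonoid A] {x y : A} {c : K} (hc : c ≠ 0) (h : x * y = c • 1) :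
    IsUnit x ∧ Ring.inverse x = c⁻¹ • y := by
  have hxy : x * (c⁻¹ • y) = 1 := by
    rw [mul_smul_comm, h, smul_smul, inv_mul_cancel₀ hc, one_smul]
  have hx : IsUnit x := IsUnit.of_mul_eq_one _ hxy
  refine ⟨hx, ?_⟩
  calc Ring.inverse x = Ring.inverse x * (x * (c⁻¹ • y)) := by rw [hxy, mul_one]
    _ = c⁻¹ • y := Ring.inverse_mul_cancel_left _ _ hx

theorem af_half (M : ℕ) (η : ℂ) : af M η (η / 2) = Complex.sinh η ^ M := by
  rw [af, add_halves]

theorem df_neg_half (M : ℕ) (η : ℂ) : df M η (-(η / 2)) = (-Complex.sinh η) ^ M := by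
  rw [df, ← Complex.sinh_neg, neg_sub_left, add_halves]

section

variable {M : ℕ}

theorem siteOp_apply (n : Fin M) (A : Matrix (Fin 2) (Fin 2) ℂ) (f : QS M) (s : Conf M) :
    siteOp n A f s = ∑ j : Fin 2, A (s n) j * f (Function.update s n j) := rfl

def partialMonodromy (η lam : ℂ) (k : ℕ) : Matrix (Fin 2) (Fin 2) (Module.End ℂ (QS M)) :=
  ((List.ofFn (Lmat M η lam)).take k).reverse.prod

theorem Tmon_eq_partialMonodromy (η lam : ℂ) : Tmon M η lam = partialMonodromy η lam M := by
  rw [partialMonodromy, List.take_of_length_le (by simp), Tmon]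

theorem partialMonodromy_zero (η lam : ℂ) : partialMonodromy (M := M) η lam 0 = 1 := by
  simp [partialMonodromy]

theorem partialMonodromy_succ (η lam : ℂ) (j : Fin M) :
    partialMonodromy η lam (j + 1) = Lmat M η lam j * partialMonodromy η lam j := by
  simp [partialMonodromy, List.take_add_one]

theorem Lmat_half_mul_apply (η : ℂ) (n : Fin M)
    (X : Matrix (Fin 2) (Fin 2) (Module.End ℂ (QS M))) (a b : Fin 2) (f : QS M) (s : Conf M) :
    (Lmat M η (η / 2) n * X) a b f s = Complex.sinh η * X (s n) b f (Function.update s n a) := by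
  have hs : s n = 0 ∨ s n = 1 := by omega
  fin_cases a <;> rcases hs with h | h <;>
    simp [Lmat, Matrix.mul_apply, Fin.sum_univ_two, siteOp_apply, h, pauliM, pauliP]

theorem Lmat_neg_half_mul_apply (η : ℂ) (n : Fin M)
    (X : Matrix (Fin 2) (Fin 2) (Module.End ℂ (QS M))) (a b : Fin 2) (f : QS M) (s : Conf M) :
    (Lmat M η (-(η / 2)) n * X) a b f s =
      if s n = a then 0
      else Complex.sinh η * (X a.rev b f (Function.update s n a) - X a b f s) := by
  have hη : -(η / 2) - η / 2 = -η := by ring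
  have hs : s n = 0 ∨ s n = 1 := by omega
  have hupd : Function.update s n (s n) = s := Function.update_eq_self n s
  fin_cases a <;> rcases hs with h | h <;> rw [h] at hupd <;>
    simp [Lmat, Matrix.mul_apply, Fin.sum_univ_two, siteOp_apply, h, hη, hupd, pauliM, pauliP] <;>
    ring

variable {m : ℕ}

theorem partialMonodromy_half_apply (η : ℂ) (j : Fin (m + 1)) (a b : Fin 2) (f : QS (m + 1))
    (s : Conf (m + 1)) :
    partialMonodromy η (η / 2) (j + 1) a b f s =
      Complex.sinh η ^ ((j : ℕ) + 1) * (if s 0 = b then 1 else 0)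
        * f (Function.update (s ∘ Fin.cycleRange j) j a) := by
  induction j using Fin.induction generalizing a s with
  | zero =>
    rw [partialMonodromy_succ, Lmat_half_mul_apply, Fin.val_zero, partialMonodromy_zero]
    by_cases h : s 0 = b <;> simp [h, Matrix.one_apply]
  | succ i ih =>
    rw [partialMonodromy_succ, Lmat_half_mul_apply, Fin.val_succ, ← Fin.val_castSucc, ih,
      Function.update_of_ne (Fin.succ_ne_zero i).symm,
      Fin.update_update_comp_cycleRange_castSucc]
    ring

theorem partialMonodromy_neg_half_apply (η : ℂ) (j : Fin (m + 1)) (a b : Fin 2)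
    (f : QS (m + 1)) (s : Conf (m + 1)) :
    partialMonodromy η (-(η / 2)) (j + 1) a b f s =
      (-Complex.sinh η) ^ ((j : ℕ) + 1) * (if a = b then 1 else -1)
        * (if s j = a.rev then 1 else 0)
        * f (Function.update (s ∘ (Fin.cycleRange j).symm) 0 b.rev) := by
  induction j using Fin.induction generalizing a s with
  | zero =>
    have hupd := Function.update_eq_self (0 : Fin (m + 1)) s
    have hid : s ∘ (Fin.cycleRange (0 : Fin (m + 1))).symm = s := by
      rw [Fin.cycleRange_zero]
      rfl
    rw [partialMonodromy_succ, Lmat_neg_half_mul_apply, Fin.val_zero, partialMonodromy_zero, hid]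
    rcases (show s 0 = 0 ∨ s 0 = 1 by omega) with h | h <;> rw [h] at hupd <;>
      fin_cases a <;> fin_cases b <;> simp [h, hupd, Matrix.one_apply]
  | succ i ih =>
    rw [partialMonodromy_succ, Lmat_neg_half_mul_apply, Fin.val_succ, ← Fin.val_castSucc, ih, ih,
      Function.update_of_ne Fin.castSucc_lt_succ.ne, Fin.rev_rev]
    have hcfg := Fin.update_update_comp_cycleRange_castSucc_symm i s b.rev
    by_cases hSa : s i.succ = a
    · simp [hSa, Fin.fin_two_eq_rev_iff_ne]
    have hS : s i.succ = a.rev := Fin.fin_two_eq_rev_iff_ne.2 hSa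
    by_cases hca : s i.castSucc = a
    · have hcr : s i.castSucc ≠ a.rev := by simp [hca, Fin.fin_two_eq_rev_iff_ne]
      rw [hca] at hcfg
      simp only [if_neg hSa, if_pos hS, if_pos hca, if_neg hcr, hcfg]
      fin_cases a <;> fin_cases b <;> simp <;> ring
    · have hc : s i.castSucc = a.rev := Fin.fin_two_eq_rev_iff_ne.2 hca
      rw [hc, ← hS, Function.update_eq_self] at hcfg
      rw [if_neg hSa, if_pos hS, if_neg hca, if_pos hc, hcfg]
      ring

theorem Tk_half_apply (η κ : ℂ) (f : QS (m + 1)) (s : Conf (m + 1)) :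
    Tk (m + 1) η κ (η / 2) f s =
      Complex.sinh η ^ (m + 1) * (if s 0 = 0 then 1 else κ) * f (s ∘ finRotate (m + 1)) := by
  have hT : Tmon (m + 1) η (η / 2) = partialMonodromy η (η / 2) ((Fin.last m : ℕ) + 1) :=
    Tmon_eq_partialMonodromy η _
  have hupd : Function.update (s ∘ finRotate (m + 1)) (Fin.last m) (s 0) =
      s ∘ finRotate (m + 1) := by
    rw [Function.update_eq_self_iff, Function.comp_apply, finRotate_last]
  simp only [Tk, Aop, Dop, hT, LinearMap.add_apply, Pi.add_apply, LinearMap.smul_apply,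
    Pi.smul_apply, smul_eq_mul, partialMonodromy_half_apply, Fin.cycleRange_last]
  rcases (show s 0 = 0 ∨ s 0 = 1 by omega) with h | h <;> rw [h] at hupd
  · simp [h, hupd]
  · simp [h, hupd]
    ring

theorem Tk_neg_half_apply (η κ : ℂ) (f : QS (m + 1)) (s : Conf (m + 1)) :
    Tk (m + 1) η κ (-(η / 2)) f s =
      (-Complex.sinh η) ^ (m + 1) * (if s (Fin.last m) = 0 then κ else 1)
        * f (s ∘ (finRotate (m + 1)).symm) := by
  have hT : Tmon (m + 1) η (-(η / 2)) = partialMonodromy η (-(η / 2)) ((Fin.last m : ℕ) + 1) :=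
    Tmon_eq_partialMonodromy η _
  have hupd : Function.update (s ∘ (finRotate (m + 1)).symm) 0 (s (Fin.last m)) =
      s ∘ (finRotate (m + 1)).symm := by
    rw [Function.update_eq_self_iff, Function.comp_apply,
      (Equiv.symm_apply_eq _).2 (finRotate_last (n := m)).symm]
  simp only [Tk, Aop, Dop, hT, LinearMap.add_apply, Pi.add_apply, LinearMap.smul_apply,
    Pi.smul_apply, smul_eq_mul, partialMonodromy_neg_half_apply, Fin.cycleRange_last]
  rcases (show s (Fin.last m) = 0 ∨ s (Fin.last m) = 1 by omega) with h | h <;> rw [h] at hupd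
  · simp [h, hupd]
    ring
  · simp [h, hupd]

theorem Tk_half_mul_Tk_neg_half (η κ : ℂ) :
    Tk (m + 1) η κ (η / 2) * Tk (m + 1) η κ (-(η / 2)) =
      (κ * (Complex.sinh η ^ (m + 1) * (-Complex.sinh η) ^ (m + 1))) • 1 := by
  refine LinearMap.ext fun f => funext fun s => ?_
  rw [Module.End.mul_apply, Tk_half_apply, Tk_neg_half_apply]
  simp only [Function.comp_apply, finRotate_last, Function.comp_assoc, Equiv.self_comp_symm,
    Function.comp_id]
  split_ifs <;> simp <;> ring

end

/-- Inversion of the twisted transfer matrix at `η/2`. -/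
theorem twisted_transfer_matrix_inversion
    (M : ℕ) (hM : 2 ≤ M) (hMe : Even M) (η : ℂ) (hη : Complex.sinh η ≠ 0) (κ : ℂ) :
    Tk M η κ (η/2) * Tk M η κ (-(η/2)) = (κ * af M η (η/2) * df M η (-(η/2))) • 1
    ∧ Tk M η κ (η/2) * Tk M η κ (-(η/2)) = (κ * Complex.sinh η ^ (2 * M)) • 1
    ∧ (κ ≠ 0 → IsUnit (Tk M η κ (η/2)) ∧
        Ring.inverse (Tk M η κ (η/2)) =
          (κ * af M η (η/2) * df M η (-(η/2)))⁻¹ • Tk M η κ (-(η/2))) := by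
  obtain ⟨m, rfl⟩ : ∃ m, M = m + 1 := ⟨M - 1, by omega⟩
  have hprod : Tk (m + 1) η κ (η / 2) * Tk (m + 1) η κ (-(η / 2)) =
      (κ * af (m + 1) η (η / 2) * df (m + 1) η (-(η / 2))) • 1 := by
    rw [Tk_half_mul_Tk_neg_half, af_half, df_neg_half, mul_assoc]
  refine ⟨hprod, ?_, fun hκ => isUnit_and_inverse_eq_of_mul_eq_smul_one ?_ hprod⟩
  · rw [hprod, af_half, df_neg_half, hMe.neg_pow, mul_assoc, ← pow_add, two_mul]
  · rw [af_half, df_neg_half]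
    exact mul_ne_zero (mul_ne_zero hκ (pow_ne_zero _ hη)) (pow_ne_zero _ (neg_ne_zero.2 hη))

end
end

section
/- Trotter limit of the eigenvalue ratios (equation (4.11) of the paper). Fix κ ∈ ℂ with κ ≠ 0, t ∈ ℝ, integers m ≥ 0 and N ≥ 1, and complex numbers z_1,…,z_N, λ_1,…,λ_N with sinh(z_b + η/2) ≠ 0, sinh(z_b − η/2) ≠ 0, sinh(λ_b + η/2) ≠ 0, sinh(λ_b − η/2) ≠ 0 for all b. For L ∈ ℕ set ε_L = (2it sinh η)/L. Then lim_{L→∞} { ∏_{b=1}^N [ ( sinh(z_b+η/2−ε_L)·sinh(λ_b−η/2−ε_L) / (sinh(z_b−η/2−ε_L)·sinh(λ_b+η/2−ε_L)) )^{L} · ( sinh(z_b−η/2)·sinh(λ_b+η/2) / (sinh(z_b+η/2)·sinh(λ_b−η/2)) )^{L−m} ] · [ 1 + (sinh^M ε_L / sinh^M(η+ε_L)) · ∏_{b=1}^N sinh(λ_b − 3η/2 − ε_L)/sinh(λ_b + η/2 − ε_L) ]^{−L} · [ 1 + κ·(sinh^M ε_L / sinh^M(η+ε_L)) · ∏_{b=1}^N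 sinh(z_b − 3η/2 − ε_L)/sinh(z_b + η/2 − ε_L) ]^{L} } = ∏_{b=1}^N e^{it(E(z_b) − E(λ_b))} · ( sinh(z_b+η/2)·sinh(λ_b−η/2) / (sinh(z_b−η/2)·sinh(λ_b+η/2)) )^{m}. -/
open Complex Matrix Finset

noncomputable section

/-!
Write `ε_L = c / L` with `c = 2 i t sinh η`. If `f` is differentiable at `x` with `f x ≠ 0`, then
`L · (f (x + c/L) / f x - 1) → c f'(x) / f(x)`, hence `(f (x + c/L) / f x) ^ L → exp (c f'(x) / f(x))`;
for `f = sinh` this gives `(sinh (x - ε_L) / sinh x) ^ L → exp (-c coth x)`. After splitting off the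
fixed ratio to the power `m`, the `b`-th factor is a product of four such powers, and the identity
`coth (u - η/2) - coth (u + η/2) = sinh η / (sinh (u - η/2) sinh (u + η/2))` turns their limits into
`exp (i t (E z_b - E λ_b))`. The two remaining factors tend to `1`: since `M ≥ 2`,
`sinh ^ M ε_L = O(L⁻²)`, so `L` times their deviation from `1` tends to `0`.
-/

open Filter Topology

theorem HasDerivAt.tendsto_nat_mul_sub {f : ℂ → ℂ} {f' x : ℂ} (hf : HasDerivAt f f' x)
    (c : ℂ) : Tendsto (fun L : ℕ => (L : ℂ) * (f (x + c / L) - f x)) atTop (𝓝 (c * f')) := by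
  have hline : HasDerivAt (fun s : ℂ => f (x + c * s)) (f' * c) 0 := by
    have h : HasDerivAt (fun s : ℂ => x + c * s) c 0 := by
      simpa using ((hasDerivAt_id (0 : ℂ)).const_mul c).const_add x
    exact hf.comp_of_eq (0 : ℂ) h (by simp)
  have hinv : Tendsto (fun L : ℕ => (L : ℂ)⁻¹) atTop (𝓝[≠] 0) :=
    tendsto_nhdsWithin_iff.mpr ⟨tendsto_inv_atTop_nhds_zero_nat,
      (eventually_ne_atTop 0).mono fun L hL => by simpa using hL⟩
  rw [mul_comm c]
  refine (hline.tendsto_slope_zero.comp hinv).congr fun L => ?_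
  simp [div_eq_mul_inv]

theorem tendsto_div_pow_exp_of_hasDerivAt {f : ℂ → ℂ} {f' x : ℂ} (hf : HasDerivAt f f' x)
    (hx : f x ≠ 0) (c : ℂ) :
    Tendsto (fun L : ℕ => (f (x + c / L) / f x) ^ L) atTop (𝓝 (exp (c * f' / f x))) := by
  have h := Complex.tendsto_one_add_pow_exp_of_tendsto
    (g := fun L : ℕ => (f (x + c / L) - f x) / f x)
    (((hf.tendsto_nat_mul_sub c).div_const (f x)).congr fun L => mul_div_assoc _ _ _)
  refine h.congr fun L => ?_
  rw [sub_div, div_self hx, add_sub_cancel]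

theorem tendsto_sinh_sub_div_pow {x : ℂ} (hx : sinh x ≠ 0) (c : ℂ) :
    Tendsto (fun L : ℕ => (sinh (x - c / L) / sinh x) ^ L) atTop
      (𝓝 (exp (-(c * cosh x / sinh x)))) := by
  have h := tendsto_div_pow_exp_of_hasDerivAt (Complex.hasDerivAt_sinh x) hx (-c)
  simp only [neg_div, ← sub_eq_add_neg, neg_mul] at h
  exact h

theorem cosh_div_sinh_sub_cosh_div_sinh {a b : ℂ} (ha : sinh a ≠ 0)
    (hb : sinh b ≠ 0) :
    cosh a / sinh a - cosh b / sinh b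
      = sinh (b - a) / (sinh a * sinh b) := by
  rw [div_sub_div _ _ ha hb, Complex.sinh_sub]
  ring

theorem tendsto_sinh_shift_pow_exp_Ebare {η u : ℂ} (hp : sinh (u + η/2) ≠ 0)
    (hm : sinh (u - η/2) ≠ 0) (t : ℝ) :
    Tendsto (fun L : ℕ =>
      (sinh (u + η/2 - 2 * I * t * sinh η / L) / sinh (u + η/2)) ^ L /
        (sinh (u - η/2 - 2 * I * t * sinh η / L) / sinh (u - η/2)) ^ L)
      atTop (𝓝 (exp (I * t * Ebare η u))) := by
  have h := (tendsto_sinh_sub_div_pow hp (2 * I * t * sinh η)).div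
    (tendsto_sinh_sub_div_pow hm (2 * I * t * sinh η)) (Complex.exp_ne_zero _)
  rwa [← Complex.exp_sub, neg_sub_neg, mul_div_assoc, mul_div_assoc, ← mul_sub,
    cosh_div_sinh_sub_cosh_div_sinh hm hp, show u + η/2 - (u - η/2) = η by ring,
    show 2 * I * t * sinh η * (sinh η / (sinh (u - η/2) * sinh (u + η/2))) = I * t * Ebare η u by
      rw [Ebare]; ring] at h

theorem tendsto_eigenvalue_ratio_factor {η z lam : ℂ}
    (hz1 : sinh (z + η/2) ≠ 0) (hz2 : sinh (z - η/2) ≠ 0)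
    (hl1 : sinh (lam + η/2) ≠ 0) (hl2 : sinh (lam - η/2) ≠ 0) (t : ℝ) (m : ℕ) :
    Tendsto (fun L : ℕ =>
      ((sinh (z + η/2 - 2 * I * t * sinh η / L) *
            sinh (lam - η/2 - 2 * I * t * sinh η / L)) /
          (sinh (z - η/2 - 2 * I * t * sinh η / L) *
            sinh (lam + η/2 - 2 * I * t * sinh η / L))) ^ (L : ℤ) *
        ((sinh (z - η/2) * sinh (lam + η/2)) /
          (sinh (z + η/2) * sinh (lam - η/2))) ^ ((L : ℤ) - (m : ℤ)))
      atTop (𝓝 (exp (I * t * (Ebare η z - Ebare η lam)) *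
        ((sinh (z + η/2) * sinh (lam - η/2)) /
          (sinh (z - η/2) * sinh (lam + η/2))) ^ m)) := by
  have h := ((tendsto_sinh_shift_pow_exp_Ebare hz1 hz2 t).mul
    ((tendsto_sinh_shift_pow_exp_Ebare hl1 hl2 t).inv₀ (Complex.exp_ne_zero _))).mul_const
    (((sinh (z + η/2) * sinh (lam - η/2)) /
      (sinh (z - η/2) * sinh (lam + η/2))) ^ m)
  rw [← Complex.exp_neg, ← Complex.exp_add, ← sub_eq_add_neg, ← mul_sub] at h
  refine h.congr fun L => ?_
  rw [zpow_sub₀ (div_ne_zero (mul_ne_zero hz2 hl1) (mul_ne_zero hz1 hl2))]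
  simp only [zpow_natCast, div_eq_mul_inv, mul_pow, inv_pow, mul_inv, inv_inv]
  ring

theorem tendsto_one_add_pow_mul_pow_nhds_one {s q : ℕ → ℂ} {c a : ℂ} {M : ℕ} (hM : 2 ≤ M)
    (hs : Tendsto (fun L : ℕ => (L : ℂ) * s L) atTop (𝓝 c)) (hq : Tendsto q atTop (𝓝 a)) :
    Tendsto (fun L : ℕ => (1 + s L ^ M * q L) ^ L) atTop (𝓝 1) := by
  have hs0 : Tendsto s atTop (𝓝 0) := by
    have h := tendsto_inv_atTop_nhds_zero_nat.mul hs
    rw [zero_mul] at h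
    refine h.congr' ((eventually_ne_atTop 0).mono fun L hL => ?_)
    rw [inv_mul_cancel_left₀ (Nat.cast_ne_zero.mpr hL)]
  have h := hs.mul ((hs0.pow (M - 1)).mul hq)
  rw [zero_pow (by omega), zero_mul, mul_zero] at h
  have h' : Tendsto (fun L : ℕ => (L : ℂ) * (s L ^ M * q L)) atTop (𝓝 0) := by
    refine h.congr fun L => ?_
    rw [← Nat.sub_add_cancel (by omega : 1 ≤ M), pow_succ, Nat.add_sub_cancel]
    ring
  simpa using Complex.tendsto_one_add_pow_exp_of_tendsto h'

theorem tendsto_one_add_sinh_pow_mul_prod_pow {η : ℂ} (hη : sinh η ≠ 0) {N : ℕ}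
    {w : Fin N → ℂ} (hw : ∀ b, sinh (w b + η/2) ≠ 0) (κ c : ℂ) {M : ℕ} (hM : 2 ≤ M) :
    Tendsto (fun L : ℕ =>
      (1 + κ * (sinh (c / L) ^ M / sinh (η + c / L) ^ M) *
        ∏ b, sinh (w b - 3 * η / 2 - c / L) / sinh (w b + η/2 - c / L)) ^ L)
      atTop (𝓝 1) := by
  have hs : Tendsto (fun L : ℕ => (L : ℂ) * sinh (c / L)) atTop (𝓝 c) := by
    simpa using (Complex.hasDerivAt_sinh 0).tendsto_nat_mul_sub c
  have hcont : ContinuousAt (fun e : ℂ => κ / sinh (η + e) ^ M *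
      ∏ b, sinh (w b - 3 * η / 2 - e) / sinh (w b + η/2 - e)) 0 := by
    fun_prop (disch := simp [hη, hw])
  have hq := hcont.tendsto.comp (tendsto_const_div_atTop_nhds_zero_nat c)
  refine (tendsto_one_add_pow_mul_pow_nhds_one hM hs hq).congr fun L => ?_
  simp only [Function.comp_apply]
  ring

theorem trotter_limit_eigenvalue_ratios_general
    (M : ℕ) (hM : 2 ≤ M) (η : ℂ) (hη : Complex.sinh η ≠ 0)
    (κ : ℂ) (t : ℝ) (m : ℕ) (N : ℕ)
    (z lam : Fin N → ℂ)
    (hz1 : ∀ b, Complex.sinh (z b + η/2) ≠ 0) (hz2 : ∀ b, Complex.sinh (z b - η/2) ≠ 0)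
    (hl1 : ∀ b, Complex.sinh (lam b + η/2) ≠ 0) (hl2 : ∀ b, Complex.sinh (lam b - η/2) ≠ 0) :
    Filter.Tendsto (fun L : ℕ =>
      (∏ b, (((Complex.sinh (z b + η/2 - 2 * Complex.I * (t : ℂ) * Complex.sinh η / (L : ℂ)) *
              Complex.sinh (lam b - η/2 - 2 * Complex.I * (t : ℂ) * Complex.sinh η / (L : ℂ))) /
            (Complex.sinh (z b - η/2 - 2 * Complex.I * (t : ℂ) * Complex.sinh η / (L : ℂ)) *
              Complex.sinh (lam b + η/2 - 2 * Complex.I * (t : ℂ) * Complex.sinh η / (L : ℂ)))) ^ (L : ℤ) *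
          ((Complex.sinh (z b - η/2) * Complex.sinh (lam b + η/2)) /
            (Complex.sinh (z b + η/2) * Complex.sinh (lam b - η/2))) ^ ((L : ℤ) - (m : ℤ)))) *
      (1 + (Complex.sinh (2 * Complex.I * (t : ℂ) * Complex.sinh η / (L : ℂ)) ^ M /
            Complex.sinh (η + 2 * Complex.I * (t : ℂ) * Complex.sinh η / (L : ℂ)) ^ M) *
          ∏ b, Complex.sinh (lam b - 3 * η / 2 - 2 * Complex.I * (t : ℂ) * Complex.sinh η / (L : ℂ)) /
            Complex.sinh (lam b + η/2 - 2 * Complex.I * (t : ℂ) * Complex.sinh η / (L : ℂ))) ^ (-(L : ℤ)) *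
      (1 + κ * (Complex.sinh (2 * Complex.I * (t : ℂ) * Complex.sinh η / (L : ℂ)) ^ M /
            Complex.sinh (η + 2 * Complex.I * (t : ℂ) * Complex.sinh η / (L : ℂ)) ^ M) *
          ∏ b, Complex.sinh (z b - 3 * η / 2 - 2 * Complex.I * (t : ℂ) * Complex.sinh η / (L : ℂ)) /
            Complex.sinh (z b + η/2 - 2 * Complex.I * (t : ℂ) * Complex.sinh η / (L : ℂ))) ^ ((L : ℤ)))
      Filter.atTop
      (nhds (∏ b, Complex.exp (Complex.I * (t : ℂ) * (Ebare η (z b) - Ebare η (lam b))) *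
        ((Complex.sinh (z b + η/2) * Complex.sinh (lam b - η/2)) /
          (Complex.sinh (z b - η/2) * Complex.sinh (lam b + η/2))) ^ m)) := by
  have hratio := tendsto_finsetProd Finset.univ fun b _ =>
    tendsto_eigenvalue_ratio_factor (hz1 b) (hz2 b) (hl1 b) (hl2 b) t m
  have hlam :=
    (tendsto_one_add_sinh_pow_mul_prod_pow hη hl1 1 (2 * I * t * sinh η) hM).inv₀ one_ne_zero
  have hz := tendsto_one_add_sinh_pow_mul_prod_pow hη hz1 κ (2 * I * t * sinh η) hM
  rw [inv_one] at hlam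
  simpa only [mul_one, one_mul, _root_.zpow_neg, zpow_natCast] using (hratio.mul hlam).mul hz

/-- Trotter limit of the eigenvalue ratios (equation (4.11)). -/
theorem trotter_limit_eigenvalue_ratios
    (M : ℕ) (hM : 2 ≤ M) (hMe : Even M) (η : ℂ) (hη : Complex.sinh η ≠ 0)
    (κ : ℂ) (hκ : κ ≠ 0) (t : ℝ) (m : ℕ) (N : ℕ) (hN : 1 ≤ N)
    (z lam : Fin N → ℂ)
    (hz1 : ∀ b, Complex.sinh (z b + η/2) ≠ 0) (hz2 : ∀ b, Complex.sinh (z b - η/2) ≠ 0)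
    (hl1 : ∀ b, Complex.sinh (lam b + η/2) ≠ 0) (hl2 : ∀ b, Complex.sinh (lam b - η/2) ≠ 0) :
    Filter.Tendsto (fun L : ℕ =>
      (∏ b, (((Complex.sinh (z b + η/2 - 2 * Complex.I * (t : ℂ) * Complex.sinh η / (L : ℂ)) *
              Complex.sinh (lam b - η/2 - 2 * Complex.I * (t : ℂ) * Complex.sinh η / (L : ℂ))) /
            (Complex.sinh (z b - η/2 - 2 * Complex.I * (t : ℂ) * Complex.sinh η / (L : ℂ)) *
              Complex.sinh (lam b + η/2 - 2 * Complex.I * (t : ℂ) * Complex.sinh η / (L : ℂ)))) ^ (L : ℤ) *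
          ((Complex.sinh (z b - η/2) * Complex.sinh (lam b + η/2)) /
            (Complex.sinh (z b + η/2) * Complex.sinh (lam b - η/2))) ^ ((L : ℤ) - (m : ℤ)))) *
      (1 + (Complex.sinh (2 * Complex.I * (t : ℂ) * Complex.sinh η / (L : ℂ)) ^ M /
            Complex.sinh (η + 2 * Complex.I * (t : ℂ) * Complex.sinh η / (L : ℂ)) ^ M) *
          ∏ b, Complex.sinh (lam b - 3 * η / 2 - 2 * Complex.I * (t : ℂ) * Complex.sinh η / (L : ℂ)) /
            Complex.sinh (lam b + η/2 - 2 * Complex.I * (t : ℂ) * Complex.sinh η / (L : ℂ))) ^ (-(L : ℤ)) *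
      (1 + κ * (Complex.sinh (2 * Complex.I * (t : ℂ) * Complex.sinh η / (L : ℂ)) ^ M /
            Complex.sinh (η + 2 * Complex.I * (t : ℂ) * Complex.sinh η / (L : ℂ)) ^ M) *
          ∏ b, Complex.sinh (z b - 3 * η / 2 - 2 * Complex.I * (t : ℂ) * Complex.sinh η / (L : ℂ)) /
            Complex.sinh (z b + η/2 - 2 * Complex.I * (t : ℂ) * Complex.sinh η / (L : ℂ))) ^ ((L : ℤ)))
      Filter.atTop
      (nhds (∏ b, Complex.exp (Complex.I * (t : ℂ) * (Ebare η (z b) - Ebare η (lam b))) *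
        ((Complex.sinh (z b + η/2) * Complex.sinh (lam b - η/2)) /
          (Complex.sinh (z b - η/2) * Complex.sinh (lam b + η/2))) ^ m)) :=
  trotter_limit_eigenvalue_ratios_general M hM η hη κ t m N z lam hz1 hz2 hl1 hl2
end
end

section
/- Hyperbolic Cauchy determinant identity. Let n ≥ 1 and let λ_1,…,λ_n, μ_1,…,μ_n ∈ ℂ satisfy sinh(μ_k − λ_j) ≠ 0 for all j,k. Then det_{1≤j,k≤n} ( 1/sinh(μ_k − λ_j) ) = ∏_{1≤b<a≤n} sinh(λ_a − λ_b)·sinh(μ_b − μ_a) / ∏_{a,b=1}^{n} sinh(μ_b − λ_a). -/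
open Complex Matrix Finset

noncomputable section

/-!
Cauchy's determinant generalizes to any kernel `s` obeying the three-term relation
`s (c - b) s (d - a) - s (c - a) s (d - b) = s (b - a) s (c - d)`: `s = id` gives the rational
Cauchy determinant, and `sinh` satisfies it (expand in exponentials). The relation is exactly
what makes the Schur complement of the `(0, 0)` entry of `(s (y k - x j))⁻¹` the same kind of
matrix for the remaining points, rescaled by diagonal matrices, so the determinant follows by
induction on the size.
-/

theorem Matrix.det_succ_eq_mul_det_schur {K : Type*} [Field K] {n : ℕ}
    (A : Matrix (Fin (n + 1)) (Fin (n + 1)) K) (h : A 0 0 ≠ 0) :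
    A.det = A 0 0 *
      (of fun i j : Fin n => A i.succ j.succ - A i.succ 0 / A 0 0 * A 0 j.succ).det := by
  set c : Fin (n + 1) → K := Fin.cons 0 fun i => A i.succ 0 / A 0 0
  set B : Matrix (Fin (n + 1)) (Fin (n + 1)) K := of fun i j => A i j - c i * A 0 j
  have hB_zero : ∀ j, B 0 j = A 0 j := fun j => by simp [B, c]
  have hB_col : ∀ i : Fin n, B i.succ 0 = 0 := fun i => by simp [B, c, h]
  rw [det_eq_of_forall_row_eq_smul_add_const (B := B) c 0 rfl fun i j => by simp [B, hB_zero],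
    det_succ_column_zero, Fin.sum_univ_succ]
  simp only [hB_col, hB_zero, mul_zero, zero_mul, sum_const_zero, add_zero]
  simp [B, c, submatrix]

theorem Fin.prod_Iio_succ {M : Type*} [CommMonoid M] {n : ℕ} (f : Fin (n + 1) → M)
    (a : Fin n) : ∏ i ∈ Iio a.succ, f i = f 0 * ∏ i ∈ Iio a, f i.succ := by
  rw [← filter_gt_eq_Iio, ← filter_gt_eq_Iio, prod_filter, prod_filter, Fin.prod_univ_succ]
  simp [Fin.succ_pos, Fin.succ_lt_succ_iff]

theorem Fin.prod_prod_Iio_succ {M : Type*} [CommMonoid M] {n : ℕ}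
    (f : Fin (n + 1) → Fin (n + 1) → M) :
    ∏ a, ∏ b ∈ Iio a, f a b =
      (∏ a : Fin n, f a.succ 0) * ∏ a : Fin n, ∏ b ∈ Iio a, f a.succ b.succ := by
  have hIio : Iio (0 : Fin (n + 1)) = ∅ := Iio_eq_empty.mpr isMin_bot
  simp [Fin.prod_univ_succ, Fin.prod_Iio_succ, prod_mul_distrib, hIio]

section Cauchy

variable {G K : Type*} [AddCommGroup G] [Field K]

def cauchyMatrix (s : G → K) {n : ℕ} (x y : Fin n → G) : Matrix (Fin n) (Fin n) K :=
  of fun j k => (s (y k - x j))⁻¹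

theorem cauchyMatrix_schur (s : G → K)
    (hs : ∀ a b c d, s (c - b) * s (d - a) - s (c - a) * s (d - b) = s (b - a) * s (c - d))
    {n : ℕ} (x y : Fin (n + 1) → G) (h : ∀ j k, s (y k - x j) ≠ 0) :
    (of fun i j : Fin n => cauchyMatrix s x y i.succ j.succ
        - cauchyMatrix s x y i.succ 0 / cauchyMatrix s x y 0 0 * cauchyMatrix s x y 0 j.succ) =
      diagonal (fun i => s (x i.succ - x 0) / s (y 0 - x i.succ)) *
        cauchyMatrix s (Fin.tail x) (Fin.tail y) *
        diagonal (fun j => s (y 0 - y j.succ) / s (y j.succ - x 0)) := by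
  ext i j
  have hrel := hs (x 0) (x i.succ) (y 0) (y j.succ)
  have hi0 := h i.succ 0
  have h0j := h 0 j.succ
  have hij := h i.succ j.succ
  have h00 := h 0 0
  simp only [cauchyMatrix, of_apply, Fin.tail, mul_diagonal, diagonal_mul]
  field_simp
  linear_combination hrel

theorem det_cauchyMatrix (s : G → K)
    (hs : ∀ a b c d, s (c - b) * s (d - a) - s (c - a) * s (d - b) = s (b - a) * s (c - d)) :
    ∀ {n : ℕ} (x y : Fin n → G), (∀ j k, s (y k - x j) ≠ 0) →
      (cauchyMatrix s x y).det =
        (∏ a, ∏ b ∈ Iio a, s (x a - x b) * s (y b - y a)) / ∏ a, ∏ b, s (y b - x a)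
  | 0, _, _, _ => by simp
  | n + 1, x, y, h => by
    have h₀ := h 0 0
    have hx : ∏ i : Fin n, s (y 0 - x i.succ) ≠ 0 := prod_ne_zero_iff.mpr fun i _ => h i.succ 0
    have hy : ∏ j : Fin n, s (y j.succ - x 0) ≠ 0 := prod_ne_zero_iff.mpr fun j _ => h 0 j.succ
    have hxy : ∏ i : Fin n, ∏ j : Fin n, s (y j.succ - x i.succ) ≠ 0 :=
      prod_ne_zero_iff.mpr fun i _ => prod_ne_zero_iff.mpr fun j _ => h i.succ j.succ
    rw [det_succ_eq_mul_det_schur _ (inv_ne_zero h₀), cauchyMatrix_schur s hs x y h, det_mul,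
      det_mul, det_diagonal, det_diagonal,
      det_cauchyMatrix s hs (Fin.tail x) (Fin.tail y) fun j k => h j.succ k.succ,
      Fin.prod_prod_Iio_succ]
    simp only [Fin.prod_univ_succ, prod_mul_distrib, prod_div_distrib, cauchyMatrix, of_apply,
      Fin.tail]
    field_simp

end Cauchy

theorem Complex.sinh_three_term (a b c d : ℂ) :
    sinh (c - b) * sinh (d - a) - sinh (c - a) * sinh (d - b) = sinh (b - a) * sinh (c - d) := by
  simp only [Complex.sinh, Complex.exp_sub, neg_sub]
  field_simp
  ring

theorem hyperbolic_cauchy_determinant_general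
    (n : ℕ) (lam mu : Fin n → ℂ)
    (h : ∀ j k, Complex.sinh (mu k - lam j) ≠ 0) :
    (Matrix.of fun j k : Fin n => (Complex.sinh (mu k - lam j))⁻¹).det =
      (∏ a, ∏ b ∈ Finset.Iio a, Complex.sinh (lam a - lam b) * Complex.sinh (mu b - mu a)) /
        ∏ a, ∏ b, Complex.sinh (mu b - lam a) :=
  det_cauchyMatrix sinh sinh_three_term lam mu h

/-- Hyperbolic Cauchy determinant identity. -/
theorem hyperbolic_cauchy_determinant
    (n : ℕ) (hn : 1 ≤ n) (lam mu : Fin n → ℂ)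
    (h : ∀ j k, Complex.sinh (mu k - lam j) ≠ 0) :
    (Matrix.of fun j k : Fin n => (Complex.sinh (mu k - lam j))⁻¹).det =
      (∏ a, ∏ b ∈ Finset.Iio a, Complex.sinh (lam a - lam b) * Complex.sinh (mu b - mu a)) /
        ∏ a, ∏ b, Complex.sinh (mu b - lam a) :=
  hyperbolic_cauchy_determinant_general n lam mu h

end
end
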